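/- arXiv:1707.05712 — 4 statements merged into one kernel-verified Lean document; each statement's English description precedes it below -/
import Mathlib

section
/- Theorem 1 (Ben-David et al. domain adaptation bound): if H is symmetric, then for every h ∈ H and every h* ∈ H, R_T(h) ≤ R_S(h) + sup_{(h₁,h₂)∈H²} |R_{T_X}(h₁,h₂) − R_{S_X}(h₁,h₂)| + R_S(h*) + R_T(h*); in particular the bound holds with h* a minimizer of R_S(h)+R_T(h) over H when such a minimizer exists. -/
open MeasureTheory Real

noncomputable section

/-- The 0-1 loss on labels in `{−1,+1}`, encoded by `Bool` (`false ↦ −1`, `true ↦ +1`). -/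
def l01 (a b : Bool) : ℝ := if a = b then 0 else 1

variable {X : Type*} [MeasurableSpace X]

/-- The expected error `R_P(h)` of a hypothesis `h` on a domain `P` over `X × Y`. -/
def risk (P : Measure (X × Bool)) (h : X → Bool) : ℝ := ∫ z, l01 (h z.1) z.2 ∂P

/-- The expected disagreement `R_{D_X}(h,h')` of two hypotheses on a marginal `D_X`. -/
def disag (D : Measure X) (h h' : X → Bool) : ℝ := ∫ x, l01 (h x) (h' x) ∂D


lemma l01_nonneg (a b : Bool) : 0 ≤ l01 a b := by
  cases a <;> cases b <;> simp [l01]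

lemma l01_le_one (a b : Bool) : l01 a b ≤ 1 := by
  cases a <;> cases b <;> simp [l01]

lemma l01_triangle (a b c : Bool) : l01 a c ≤ l01 a b + l01 b c := by
  cases a <;> cases b <;> cases c <;> simp [l01]

lemma l01_meas : Measurable (fun p : Bool × Bool => l01 p.1 p.2) :=
  measurable_of_countable _

lemma integrable_l01 {α : Type*} [MeasurableSpace α] (μ : Measure α) [IsProbabilityMeasure μ]
    {f g : α → Bool} (hf : Measurable f) (hg : Measurable g) :
    Integrable (fun x => l01 (f x) (g x)) μ := by
  have hm : Measurable (fun x => l01 (f x) (g x)) := l01_meas.comp (hf.prodMk hg)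
  refine (integrable_const (1:ℝ)).mono' hm.aestronglyMeasurable ?_
  filter_upwards with x
  rw [Real.norm_eq_abs, abs_of_nonneg (l01_nonneg _ _)]
  exact l01_le_one _ _

lemma disag_bounds {α : Type*} [MeasurableSpace α] (μ : Measure α) [IsProbabilityMeasure μ]
    (f g : α → Bool) : 0 ≤ disag μ f g ∧ disag μ f g ≤ 1 := by
  constructor
  · exact integral_nonneg fun x => l01_nonneg _ _
  · calc disag μ f g ≤ ∫ _, (1:ℝ) ∂μ := by
          by_cases hm : Integrable (fun x => l01 (f x) (g x)) μ
          · exact integral_mono hm (integrable_const 1) fun x => l01_le_one _ _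
          · rw [disag, integral_undef hm]; simp
        _ = 1 := by simp

lemma risk_triangle (P : Measure (X × Bool)) [IsProbabilityMeasure P]
    {f g : X → Bool} (hf : Measurable f) (hg : Measurable g) :
    risk P f ≤ disag (P.map Prod.fst) f g + risk P g := by
  have hfg : Integrable (fun z : X × Bool => l01 (f z.1) (g z.1)) P :=
    integrable_l01 P (hf.comp measurable_fst) (hg.comp measurable_fst)
  have hgr : Integrable (fun z : X × Bool => l01 (g z.1) z.2) P :=
    integrable_l01 P (hg.comp measurable_fst) measurable_snd
  have hmap : disag (P.map Prod.fst) f g = ∫ z, l01 (f z.1) (g z.1) ∂P := by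
    rw [disag]
    exact integral_map measurable_fst.aemeasurable
      (l01_meas.comp (hf.prodMk hg)).aestronglyMeasurable
  rw [risk, risk, hmap, ← integral_add hfg hgr]
  exact integral_mono (integrable_l01 P (hf.comp measurable_fst) measurable_snd)
    (hfg.add hgr) fun z => l01_triangle _ _ _

/-- Theorem 1 (Ben-David et al. domain adaptation bound): if `H` is symmetric
(closed under `h ↦ −h`, i.e. pointwise boolean negation), then for every `h ∈ H`
and every `h* ∈ H`,
`R_T(h) ≤ R_S(h) + sup_{(h₁,h₂)∈H²} |R_{T_X}(h₁,h₂) − R_{S_X}(h₁,h₂)| + R_S(h*) + R_T(h*)`;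
in particular the bound holds with `h*` a minimizer of `R_S + R_T` over `H` when it exists. -/
theorem ben_david_da_bound
    (S T : Measure (X × Bool)) [IsProbabilityMeasure S] [IsProbabilityMeasure T]
    (H : Set (X → Bool)) (hHmeas : ∀ h ∈ H, Measurable h)
    (hHsym : ∀ h ∈ H, (fun x => !(h x)) ∈ H)
    (h : X → Bool) (hh : h ∈ H)
    (hstar : X → Bool) (hhstar : hstar ∈ H) :
    risk T h ≤ risk S h
      + (⨆ h₁ ∈ H, ⨆ h₂ ∈ H,
          |disag (T.map Prod.fst) h₁ h₂ - disag (S.map Prod.fst) h₁ h₂|)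
      + (risk S hstar + risk T hstar) := by
  haveI : IsProbabilityMeasure (T.map Prod.fst) :=
    Measure.isProbabilityMeasure_map measurable_fst.aemeasurable
  haveI : IsProbabilityMeasure (S.map Prod.fst) :=
    Measure.isProbabilityMeasure_map measurable_fst.aemeasurable
  set d : (X → Bool) → (X → Bool) → ℝ := fun h₁ h₂ =>
    |disag (T.map Prod.fst) h₁ h₂ - disag (S.map Prod.fst) h₁ h₂| with hd
  have hdbound : ∀ h₁ h₂, d h₁ h₂ ≤ 1 := by
    intro h₁ h₂
    have t1 := disag_bounds (T.map Prod.fst) h₁ h₂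
    have t2 := disag_bounds (S.map Prod.fst) h₁ h₂
    rw [hd, abs_le]; constructor <;> linarith [t1.1, t1.2, t2.1, t2.2]
  have hle : d h hstar ≤ ⨆ h₁ ∈ H, ⨆ h₂ ∈ H, d h₁ h₂ := by
    have hinner : d h hstar ≤ ⨆ h₂ ∈ H, d h h₂ := by
      have hb : BddAbove (Set.range fun h₂ => ⨆ _ : h₂ ∈ H, d h h₂) := by
        refine ⟨1, ?_⟩
        rintro _ ⟨h₂, rfl⟩
        exact Real.iSup_le (fun _ => hdbound _ _) one_pos.le
      calc d h hstar = ⨆ _ : hstar ∈ H, d h hstar := by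
            rw [ciSup_pos hhstar]
        _ ≤ _ := le_ciSup hb hstar
    have hb2 : BddAbove (Set.range fun h₁ => ⨆ _ : h₁ ∈ H, ⨆ h₂ ∈ H, d h₁ h₂) := by
      refine ⟨1, ?_⟩
      rintro _ ⟨h₁, rfl⟩
      refine Real.iSup_le (fun _ => ?_) one_pos.le
      exact Real.iSup_le (fun h₂ => Real.iSup_le (fun _ => hdbound _ _) one_pos.le) one_pos.le
    calc d h hstar ≤ ⨆ h₂ ∈ H, d h h₂ := hinner
      _ = ⨆ _ : h ∈ H, ⨆ h₂ ∈ H, d h h₂ := by rw [ciSup_pos hh]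
      _ ≤ _ := le_ciSup hb2 h
  have h1 : risk T h ≤ disag (T.map Prod.fst) h hstar + risk T hstar :=
    risk_triangle T (hHmeas h hh) (hHmeas hstar hhstar)
  have h2 : disag (S.map Prod.fst) h hstar ≤ risk S h + risk S hstar := by
    have hfg : Integrable (fun z : X × Bool => l01 (h z.1) (hstar z.1)) S :=
      integrable_l01 S ((hHmeas h hh).comp measurable_fst)
        ((hHmeas hstar hhstar).comp measurable_fst)
    have hmap : disag (S.map Prod.fst) h hstar = ∫ z, l01 (h z.1) (hstar z.1) ∂S := by
      rw [disag]
      exact integral_map measurable_fst.aemeasurable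
        (l01_meas.comp ((hHmeas h hh).prodMk (hHmeas hstar hhstar))).aestronglyMeasurable
    have hr1 : Integrable (fun z : X × Bool => l01 (h z.1) z.2) S :=
      integrable_l01 S ((hHmeas h hh).comp measurable_fst) measurable_snd
    have hr2 : Integrable (fun z : X × Bool => l01 (hstar z.1) z.2) S :=
      integrable_l01 S ((hHmeas hstar hhstar).comp measurable_fst) measurable_snd
    rw [risk, risk, hmap, ← integral_add hr1 hr2]
    refine integral_mono hfg (hr1.add hr2) fun z => ?_
    have := l01_triangle (h z.1) z.2 (hstar z.1)
    have hsymm : l01 z.2 (hstar z.1) = l01 (hstar z.1) z.2 := by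
      cases z.2 <;> cases hstar z.1 <;> simp [l01]
    linarith
  have h3 : disag (T.map Prod.fst) h hstar - disag (S.map Prod.fst) h hstar ≤ d h hstar :=
    le_abs_self _
  linarith

end
end

section
/- Theorem 3 (first PAC-Bayesian domain adaptation bound): for any source domain S and target domain T over X×Y and any probability measure ρ on H, R_T(G_ρ) ≤ R_S(G_ρ) + (1/2)·dis_ρ(S_X,T_X) + λ_ρ, where λ_ρ = |e_T(ρ) − e_S(ρ)|. -/
open MeasureTheory Real

noncomputable section

variable {X H : Type*} [MeasurableSpace X] [MeasurableSpace H]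

/-- The Gibbs risk `R_P(G_ρ) = E_{h~ρ} R_P(h)`. -/
def gibbsRisk (F : H → X → Bool) (P : Measure (X × Bool)) (ρ : Measure H) : ℝ :=
  ∫ h, risk P (F h) ∂ρ

/-- The expected disagreement `d_{D_X}(ρ) = E_{(h,h')~ρ⊗ρ} R_{D_X}(h,h')`. -/
def expDisag (F : H → X → Bool) (D : Measure X) (ρ : Measure H) : ℝ :=
  ∫ p, disag D (F p.1) (F p.2) ∂(ρ.prod ρ)

/-- The expected joint error `e_P(ρ) = E_{(h,h')~ρ⊗ρ} E_{(x,y)~P} ℓ(h(x),y)·ℓ(h'(x),y)`. -/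
def jointErr (F : H → X → Bool) (P : Measure (X × Bool)) (ρ : Measure H) : ℝ :=
  ∫ p, ∫ z, l01 (F p.1 z.1) z.2 * l01 (F p.2 z.1) z.2 ∂P ∂(ρ.prod ρ)

lemma l01_abs_le (a b : Bool) : |l01 a b| ≤ 1 := by
  cases a <;> cases b <;> simp [l01]

lemma l01_key (a b c : Bool) :
    l01 a c + l01 b c = l01 a b + 2 * (l01 a c * l01 b c) := by
  cases a <;> cases b <;> cases c <;> simp [l01] <;> norm_num

lemma integrable_of_abs_le_one {α : Type*} [MeasurableSpace α] (μ : Measure α)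
    [IsFiniteMeasure μ] {f : α → ℝ} (hm : AEStronglyMeasurable f μ)
    (hb : ∀ x, |f x| ≤ 1) : Integrable f μ :=
  ⟨hm, HasFiniteIntegral.of_bounded (C := 1) (ae_of_all _ fun x => by simpa using hb x)⟩

lemma gibbs_split (F : H → X → Bool) (hF : Measurable (Function.uncurry F))
    (P : Measure (X × Bool)) [IsProbabilityMeasure P]
    (ρ : Measure H) [IsProbabilityMeasure ρ] :
    2 * gibbsRisk F P ρ = expDisag F (P.map Prod.fst) ρ + 2 * jointErr F P ρ := by
  set μ : Measure (H × H) := ρ.prod ρ with hμ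
  have hBool : ∀ g : Bool × Bool → ℝ, Measurable g := fun g => measurable_of_countable g
  -- measurability of the various integrands on (H × H) × (X × Bool)
  have hq1 : Measurable fun q : (H × H) × (X × Bool) => F q.1.1 q.2.1 :=
    hF.comp ((measurable_fst.comp measurable_fst).prodMk (measurable_fst.comp measurable_snd))
  have hq2 : Measurable fun q : (H × H) × (X × Bool) => F q.1.2 q.2.1 :=
    hF.comp ((measurable_snd.comp measurable_fst).prodMk (measurable_fst.comp measurable_snd))
  have hqy : Measurable fun q : (H × H) × (X × Bool) => q.2.2 :=
    measurable_snd.comp measurable_snd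
  have hl : ∀ {g g' : (H × H) × (X × Bool) → Bool}, Measurable g → Measurable g' →
      Measurable fun q => l01 (g q) (g' q) := fun hg hg' =>
    (hBool fun ab : Bool × Bool => l01 ab.1 ab.2).comp (hg.prodMk hg')
  have hm1 : Measurable fun q : (H × H) × (X × Bool) => l01 (F q.1.1 q.2.1) q.2.2 :=
    hl hq1 hqy
  have hm2 : Measurable fun q : (H × H) × (X × Bool) => l01 (F q.1.2 q.2.1) q.2.2 :=
    hl hq2 hqy
  have hmd : Measurable fun q : (H × H) × (X × Bool) => l01 (F q.1.1 q.2.1) (F q.1.2 q.2.1) :=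
    hl hq1 hq2
  have hmj : Measurable fun q : (H × H) × (X × Bool) =>
      l01 (F q.1.1 q.2.1) q.2.2 * l01 (F q.1.2 q.2.1) q.2.2 := hm1.mul hm2
  -- the four inner-integral functions on H × H
  set f1 : H × H → ℝ := fun p => ∫ z, l01 (F p.1 z.1) z.2 ∂P with hf1
  set f2 : H × H → ℝ := fun p => ∫ z, l01 (F p.2 z.1) z.2 ∂P with hf2
  set fd : H × H → ℝ := fun p => ∫ z, l01 (F p.1 z.1) (F p.2 z.1) ∂P with hfd
  set fj : H × H → ℝ := fun p => ∫ z, l01 (F p.1 z.1) z.2 * l01 (F p.2 z.1) z.2 ∂P with hfj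
  have key_bound : ∀ {g : (H × H) × (X × Bool) → ℝ}, (∀ q, |g q| ≤ 1) →
      ∀ p : H × H, |∫ z, g (p, z) ∂P| ≤ 1 := by
    intro g hg p
    calc |∫ z, g (p, z) ∂P| ≤ ∫ z, |g (p, z)| ∂P := by
          simpa [Real.norm_eq_abs] using norm_integral_le_integral_norm fun z => g (p, z)
      _ ≤ ∫ _z, (1 : ℝ) ∂P := by
          apply integral_mono_of_nonneg (ae_of_all _ fun z => abs_nonneg _)
            (integrable_const 1) (ae_of_all _ fun z => hg (p, z))
      _ = 1 := by simp
  have habs1 : ∀ q : (H × H) × (X × Bool), |l01 (F q.1.1 q.2.1) q.2.2| ≤ 1 :=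
    fun q => l01_abs_le _ _
  have habs2 : ∀ q : (H × H) × (X × Bool), |l01 (F q.1.2 q.2.1) q.2.2| ≤ 1 :=
    fun q => l01_abs_le _ _
  have habsd : ∀ q : (H × H) × (X × Bool), |l01 (F q.1.1 q.2.1) (F q.1.2 q.2.1)| ≤ 1 :=
    fun q => l01_abs_le _ _
  have habsj : ∀ q : (H × H) × (X × Bool),
      |l01 (F q.1.1 q.2.1) q.2.2 * l01 (F q.1.2 q.2.1) q.2.2| ≤ 1 := fun q => by
    rw [abs_mul]
    exact mul_le_one₀ (l01_abs_le _ _) (abs_nonneg _) (l01_abs_le _ _)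
  -- integrability of the inner-integral functions on μ
  have int_of : ∀ {g : (H × H) × (X × Bool) → ℝ}, Measurable g → (∀ q, |g q| ≤ 1) →
      Integrable (fun p => ∫ z, g (p, z) ∂P) μ := by
    intro g hg hb
    exact integrable_of_abs_le_one μ
      (hg.stronglyMeasurable.integral_prod_right').aestronglyMeasurable (key_bound hb)
  have intf1 : Integrable f1 μ := int_of hm1 habs1
  have intf2 : Integrable f2 μ := int_of hm2 habs2
  have intfd : Integrable fd μ := int_of hmd habsd
  have intfj : Integrable fj μ := int_of hmj habsj
  -- pointwise in p : the inner integrals satisfy the key identity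
  have inner_int : ∀ (g : (H × H) × (X × Bool) → ℝ), Measurable g → (∀ q, |g q| ≤ 1) →
      ∀ p : H × H, Integrable (fun z => g (p, z)) P := by
    intro g hg hb p
    refine integrable_of_abs_le_one P ?_ fun z => hb (p, z)
    exact (hg.comp (measurable_prodMk_left)).aestronglyMeasurable
  have hpt : ∀ p : H × H, f1 p + f2 p = fd p + 2 * fj p := by
    intro p
    have h1 := inner_int _ hm1 habs1 p
    have h2 := inner_int _ hm2 habs2 p
    have hd := inner_int _ hmd habsd p
    have hj := inner_int _ hmj habsj p
    rw [hf1, hf2, hfd, hfj]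
    rw [← integral_add h1 h2, ← integral_const_mul 2, ← integral_add hd (hj.const_mul 2)]
    exact integral_congr_ae (ae_of_all _ fun z => l01_key _ _ _)
  -- rewrite expDisag via the pushforward
  have hFh : ∀ h : H, Measurable (F h) := fun h =>
    hF.comp (measurable_const.prodMk measurable_id)
  have hexp : expDisag F (P.map Prod.fst) ρ = ∫ p, fd p ∂μ := by
    refine integral_congr_ae (ae_of_all _ fun p => ?_)
    have hm : Measurable fun x : X => l01 (F p.1 x) (F p.2 x) :=
      (hBool fun ab : Bool × Bool => l01 ab.1 ab.2).comp ((hFh p.1).prodMk (hFh p.2))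
    show disag (P.map Prod.fst) (F p.1) (F p.2) = fd p
    rw [disag, integral_map measurable_fst.aemeasurable hm.aestronglyMeasurable]
  -- the two marginal integrals give the Gibbs risk
  have hgm : Measurable fun q : H × (X × Bool) => l01 (F q.1 q.2.1) q.2.2 :=
    (hBool fun ab : Bool × Bool => l01 ab.1 ab.2).comp
      ((hF.comp (measurable_fst.prodMk (measurable_fst.comp measurable_snd))).prodMk
        (measurable_snd.comp measurable_snd))
  have hg : StronglyMeasurable fun h : H => risk P (F h) :=
    hgm.stronglyMeasurable.integral_prod_right'
  have hmap1 : ∫ p, f1 p ∂μ = gibbsRisk F P ρ := by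
    have h1 : μ.map Prod.fst = ρ := by rw [hμ, Measure.map_fst_prod]; simp
    rw [gibbsRisk, ← h1,
      integral_map measurable_fst.aemeasurable hg.aestronglyMeasurable]
    rfl
  have hmap2 : ∫ p, f2 p ∂μ = gibbsRisk F P ρ := by
    have h2 : μ.map Prod.snd = ρ := by rw [hμ, Measure.map_snd_prod]; simp
    rw [gibbsRisk, ← h2,
      integral_map measurable_snd.aemeasurable hg.aestronglyMeasurable]
    rfl
  have hjoint : jointErr F P ρ = ∫ p, fj p ∂μ := rfl
  calc 2 * gibbsRisk F P ρ = ∫ p, f1 p ∂μ + ∫ p, f2 p ∂μ := by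
        rw [hmap1, hmap2]; ring
    _ = ∫ p, (f1 p + f2 p) ∂μ := (integral_add intf1 intf2).symm
    _ = ∫ p, (fd p + 2 * fj p) ∂μ := integral_congr_ae (ae_of_all _ hpt)
    _ = ∫ p, fd p ∂μ + 2 * ∫ p, fj p ∂μ := by
        rw [integral_add intfd (intfj.const_mul 2), integral_const_mul]
    _ = expDisag F (P.map Prod.fst) ρ + 2 * jointErr F P ρ := by rw [hexp, hjoint]

/-- Theorem 3 (first PAC-Bayesian domain adaptation bound): for any source domain `S`
and target domain `T` over `X×Y` and any probability measure `ρ` on `H`,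
`R_T(G_ρ) ≤ R_S(G_ρ) + (1/2)·dis_ρ(S_X,T_X) + λ_ρ`, where
`dis_ρ(S_X,T_X) = |d_{T_X}(ρ) − d_{S_X}(ρ)|` and `λ_ρ = |e_T(ρ) − e_S(ρ)|`. -/
theorem first_pac_bayes_da_bound
    (F : H → X → Bool) (hF : Measurable (Function.uncurry F))
    (S T : Measure (X × Bool)) [IsProbabilityMeasure S] [IsProbabilityMeasure T]
    (ρ : Measure H) [IsProbabilityMeasure ρ] :
    gibbsRisk F T ρ ≤ gibbsRisk F S ρ
      + (1 / 2) * |expDisag F (T.map Prod.fst) ρ - expDisag F (S.map Prod.fst) ρ|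
      + |jointErr F T ρ - jointErr F S ρ| := by
  have hT := gibbs_split F hF T ρ
  have hS := gibbs_split F hF S ρ
  have h1 : expDisag F (T.map Prod.fst) ρ - expDisag F (S.map Prod.fst) ρ ≤
      |expDisag F (T.map Prod.fst) ρ - expDisag F (S.map Prod.fst) ρ| := le_abs_self _
  have h2 : jointErr F T ρ - jointErr F S ρ ≤ |jointErr F T ρ - jointErr F S ρ| :=
    le_abs_self _
  linarith

end
end

section
/- Theorem 5 (Catoni-type PAC-Bayesian bound for arbitrary bounded losses): for any domain P over X×Y, any prior probability measure π on H, any measurable loss ℓ : H×X×Y → [0,1], any δ ∈ (0,1], and any α > 0, with probability at least 1−δ over the draw of an i.i.d. sample {(x_i,y_i)}_{i=1}^m ~ P^m, simultaneously for every probability measure ρ on H: E_{(x,y)~P} E_{h~ρ} ℓ(h,x,y) ≤ (α/(1−e^{−α})) · [ (1/m)·Σ_{i=1}^m E_{h~ρ} ℓ(h,x_i,y_i) + (KL(ρ‖π) + ln(1/δ)) / (m·α) ]. -/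
open MeasureTheory

noncomputable section

variable {X H : Type*} [MeasurableSpace X] [MeasurableSpace H]

/-- The Kullback–Leibler divergence `KL(ρ‖π) = E_{h~ρ} ln(dρ/dπ)`, expressed through the
log-likelihood ratio `llr ρ π = log (dρ/dπ)`. It equals the usual KL divergence whenever
`ρ ≪ π` and `llr ρ π` is `ρ`-integrable (the cases where `KL(ρ‖π) < +∞`; otherwise
`KL(ρ‖π) = +∞` and the bound below is vacuous). -/
def klReal (ρ π : Measure H) : ℝ := ∫ h, llr ρ π h ∂ρ

/-! Convexity of `exp` gives `E exp(-α ℓ(h,·)) ≤ 1 - (1 - e^{-α}) r(h) ≤ exp(-(1 - e^{-α}) r(h))`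
for the risk `r(h)` of a single hypothesis, so `F_s(h) = m (1 - e^{-α}) r(h) - α ∑ᵢ ℓ(h, sᵢ)`
satisfies `E_s exp F_s(h) ≤ 1`. Averaging over the prior and applying Markov's inequality,
`∫ exp F_s dπ < 1/δ` with probability at least `1 - δ`; on that event the Donsker–Varadhan
change of measure `E_ρ F_s ≤ KL(ρ‖π) + log ∫ exp F_s dπ` holds for every posterior at once,
and rearranging gives the bound. -/

open Set Function

section

open Real

lemma klReal_nonneg {μ ν : Measure H} [IsProbabilityMeasure μ] [IsProbabilityMeasure ν]
    (hμν : μ ≪ ν) (hllr : Integrable (llr μ ν) μ) : 0 ≤ klReal μ ν := by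
  simpa [klReal] using InformationTheory.integral_llr_add_sub_measure_univ_nonneg hμν hllr

/-- Donsker–Varadhan: Gibbs' inequality for `μ` against the tilted measure `ν.tilted f`. -/
theorem integral_le_klReal_add_log_integral_exp {μ ν : Measure H} [IsProbabilityMeasure μ]
    [IsProbabilityMeasure ν] (hμν : μ ≪ ν) (hllr : Integrable (llr μ ν) μ) {f : H → ℝ}
    (hfμ : Integrable f μ) (hfν : Integrable (fun h ↦ exp (f h)) ν) :
    ∫ h, f h ∂μ ≤ klReal μ ν + log (∫ h, exp (f h) ∂ν) := by
  have : IsProbabilityMeasure (ν.tilted f) := isProbabilityMeasure_tilted hfν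
  have hgibbs := klReal_nonneg (hμν.trans (absolutelyContinuous_tilted hfν))
    (integrable_llr_tilted_right hμν hfμ hllr hfν)
  rw [klReal, integral_llr_tilted_right hμν hfμ hfν hllr] at hgibbs
  rw [klReal]
  linarith

lemma integrable_exp_of_le {Ω : Type*} [MeasurableSpace Ω] {μ : Measure Ω} [IsFiniteMeasure μ]
    {f : Ω → ℝ} (hf : Measurable f) {C : ℝ} (hfC : ∀ x, f x ≤ C) :
    Integrable (fun x ↦ exp (f x)) μ :=
  .of_mem_Icc 0 (exp C) hf.exp.aemeasurable <|
    ae_of_all _ fun x ↦ ⟨(exp_pos _).le, exp_le_exp.2 (hfC x)⟩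

lemma exp_neg_mul_le_one_sub_mul (α : ℝ) {t : ℝ} (ht : t ∈ Icc (0 : ℝ) 1) :
    exp (-(α * t)) ≤ 1 - (1 - exp (-α)) * t := by
  have h := convexOn_exp.2 (mem_univ 0) (mem_univ (-α)) (sub_nonneg.2 ht.2) ht.1 (by ring)
  simp only [smul_eq_mul, mul_zero, zero_add, exp_zero, mul_one] at h
  rw [mul_neg, mul_comm] at h
  linarith

lemma integral_exp_neg_mul_le {Z : Type*} [MeasurableSpace Z] {P : Measure Z}
    [IsProbabilityMeasure P] {f : Z → ℝ} (hf : Measurable f) (hf01 : ∀ z, f z ∈ Icc (0 : ℝ) 1)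
    (α : ℝ) : ∫ z, exp (-(α * f z)) ∂P ≤ exp (-((1 - exp (-α)) * ∫ z, f z ∂P)) := by
  have hfi : Integrable f P := .of_mem_Icc 0 1 hf.aemeasurable (ae_of_all _ hf01)
  have hexpi : Integrable (fun z ↦ exp (-(α * f z))) P :=
    integrable_exp_of_le (hf.const_mul α).neg (C := |α|) fun z ↦ by
      nlinarith [neg_abs_le α, le_abs_self α, (hf01 z).1, (hf01 z).2]
  calc ∫ z, exp (-(α * f z)) ∂P
      ≤ ∫ z, (1 - (1 - exp (-α)) * f z) ∂P :=
        integral_mono hexpi ((integrable_const 1).sub (hfi.const_mul _))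
          fun z ↦ exp_neg_mul_le_one_sub_mul α (hf01 z)
    _ = 1 - (1 - exp (-α)) * ∫ z, f z ∂P := by
        rw [integral_sub (integrable_const 1) (hfi.const_mul _), integral_const_mul]
        simp
    _ ≤ exp (-((1 - exp (-α)) * ∫ z, f z ∂P)) := by
        linarith [add_one_le_exp (-((1 - exp (-α)) * ∫ z, f z ∂P))]

lemma integral_pi_exp_mul_integral_sub_mul_sum_le_one {ι Z : Type*} [Fintype ι]
    [MeasurableSpace Z] {P : Measure Z} [IsProbabilityMeasure P] {f : Z → ℝ} (hf : Measurable f)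
    (hf01 : ∀ z, f z ∈ Icc (0 : ℝ) 1) (α : ℝ) :
    ∫ s, exp (Fintype.card ι * ((1 - exp (-α)) * ∫ z, f z ∂P) - α * ∑ i, f (s i))
      ∂(Measure.pi fun _ : ι ↦ P) ≤ 1 := by
  set a := Fintype.card ι * ((1 - exp (-α)) * ∫ z, f z ∂P)
  have hprod : ∀ s : ι → Z, exp (a - α * ∑ i, f (s i)) = exp a * ∏ i, exp (-(α * f (s i))) := by
    intro s
    rw [← exp_sum, ← exp_add, Finset.sum_neg_distrib, ← Finset.mul_sum, ← sub_eq_add_neg]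
  calc ∫ s, exp (a - α * ∑ i, f (s i)) ∂(Measure.pi fun _ : ι ↦ P)
      = exp a * (∫ z, exp (-(α * f z)) ∂P) ^ Fintype.card ι := by
        simp_rw [hprod, integral_const_mul]
        rw [integral_fintype_prod_eq_pow (fun z ↦ exp (-(α * f z)))]
    _ ≤ exp a * exp (-((1 - exp (-α)) * ∫ z, f z ∂P)) ^ Fintype.card ι := by
        gcongr
        exact integral_exp_neg_mul_le hf hf01 α
    _ = 1 := by rw [← exp_nat_mul, mul_neg, ← exp_add, add_neg_cancel, exp_zero]

end

section

variable {Ω : Type*} [MeasurableSpace Ω] {μ : Measure Ω} [IsProbabilityMeasure μ]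

lemma ofReal_one_sub_le_measure_lt_one_div {A : Ω → ℝ} (hA0 : 0 ≤ A) (hAi : Integrable A μ)
    (hA1 : ∫ x, A x ∂μ ≤ 1) {δ : ℝ} (hδ : 0 < δ) :
    ENNReal.ofReal (1 - δ) ≤ μ {x | A x < 1 / δ} := by
  have hmarkov : μ.real {x | 1 / δ ≤ A x} ≤ δ := by
    have := (mul_meas_ge_le_integral_of_nonneg (ae_of_all _ hA0) hAi (1 / δ)).trans hA1
    rwa [one_div_mul_eq_div, div_le_one hδ] at this
  have hnull : NullMeasurableSet {x | 1 / δ ≤ A x} μ :=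
    nullMeasurableSet_le aemeasurable_const hAi.aemeasurable
  have hcompl : {x | A x < 1 / δ} = {x | 1 / δ ≤ A x}ᶜ := by
    ext
    simp
  rw [hcompl, prob_compl_eq_one_sub₀ hnull, ENNReal.ofReal_sub _ hδ.le, ENNReal.ofReal_one,
    ← ofReal_measureReal]
  gcongr

theorem ofReal_one_sub_le_measure_integral_exp_lt {ν : Measure H} [IsProbabilityMeasure ν]
    {F : Ω → H → ℝ} (hF : Measurable (uncurry F)) {C : ℝ} (hFC : ∀ s h, F s h ≤ C)
    (hmom : ∀ h, ∫ s, Real.exp (F s h) ∂μ ≤ 1) {δ : ℝ} (hδ : 0 < δ) :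
    ENNReal.ofReal (1 - δ) ≤ μ {s | ∫ h, Real.exp (F s h) ∂ν < 1 / δ} := by
  have hexp : Integrable (fun p ↦ Real.exp (uncurry F p)) (μ.prod ν) :=
    integrable_exp_of_le hF fun p ↦ hFC p.1 p.2
  refine ofReal_one_sub_le_measure_lt_one_div
    (fun s ↦ integral_nonneg fun _ ↦ (Real.exp_pos _).le) hexp.integral_prod_left ?_ hδ
  calc ∫ s, ∫ h, Real.exp (F s h) ∂ν ∂μ = ∫ h, ∫ s, Real.exp (F s h) ∂μ ∂ν :=
        integral_integral_swap hexp
    _ ≤ ∫ _, 1 ∂ν :=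
        integral_mono_of_nonneg (ae_of_all _ fun _ ↦ integral_nonneg fun _ ↦ (Real.exp_pos _).le)
          (integrable_const 1) (ae_of_all _ hmom)
    _ = 1 := by simp

end

theorem catoni_linear_bound {Z ι : Type*} [MeasurableSpace Z] [Fintype ι]
    (P : Measure Z) [IsProbabilityMeasure P] (π : Measure H) [IsProbabilityMeasure π]
    {ℓ : H → Z → ℝ} (hℓ : Measurable (uncurry ℓ)) (hℓ01 : ∀ h z, ℓ h z ∈ Icc (0 : ℝ) 1)
    {δ : ℝ} (hδ : 0 < δ) {α : ℝ} (hα : 0 ≤ α) :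
    ENNReal.ofReal (1 - δ) ≤ Measure.pi (fun _ : ι ↦ P)
      {s | ∀ ρ : Measure H, IsProbabilityMeasure ρ → ρ ≪ π → Integrable (llr ρ π) ρ →
        Fintype.card ι * ((1 - Real.exp (-α)) * ∫ h, ∫ z, ℓ h z ∂P ∂ρ)
          ≤ α * ∑ i, ∫ h, ℓ h (s i) ∂ρ + klReal ρ π + Real.log (1 / δ)} := by
  set c := 1 - Real.exp (-α)
  have hc : 0 ≤ c := sub_nonneg.2 (Real.exp_le_one_iff.2 (neg_nonpos.2 hα))
  set r : H → ℝ := fun h ↦ ∫ z, ℓ h z ∂P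
  have hr : Measurable r := hℓ.stronglyMeasurable.integral_prod_right.measurable
  have hr1 : ∀ h, r h ≤ 1 := fun h ↦ by
    simpa using integral_mono_of_nonneg (ae_of_all _ fun z ↦ (hℓ01 h z).1)
      (integrable_const (μ := P) (1 : ℝ)) (ae_of_all _ fun z ↦ (hℓ01 h z).2)
  let F : (ι → Z) → H → ℝ := fun s h ↦ Fintype.card ι * (c * r h) - α * ∑ i, ℓ h (s i)
  have hF : Measurable (uncurry F) :=
    (measurable_const.mul (measurable_const.mul (hr.comp measurable_snd))).sub
      (measurable_const.mul (Finset.measurable_sum _ fun i _ ↦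
        hℓ.comp (measurable_snd.prodMk ((measurable_pi_apply i).comp measurable_fst))))
  have hFC : ∀ s h, F s h ≤ Fintype.card ι * c := fun s h ↦ by
    have := Finset.sum_nonneg fun i (_ : i ∈ Finset.univ) ↦ (hℓ01 h (s i)).1
    have := mul_le_of_le_one_right hc (hr1 h)
    simp only [F]
    nlinarith
  have hmom : ∀ h, ∫ s, Real.exp (F s h) ∂Measure.pi (fun _ : ι ↦ P) ≤ 1 := fun h ↦
    integral_pi_exp_mul_integral_sub_mul_sum_le_one (hℓ.comp measurable_prodMk_left) (hℓ01 h) α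
  refine (ofReal_one_sub_le_measure_integral_exp_lt (ν := π) hF hFC hmom hδ).trans
    (measure_mono fun s hs ρ _ hρπ hllr ↦ ?_)
  have hℓρ : ∀ i, Integrable (fun h ↦ ℓ h (s i)) ρ := fun i ↦
    .of_mem_Icc 0 1 (hℓ.comp measurable_prodMk_right).aemeasurable
      (ae_of_all _ fun h ↦ hℓ01 h (s i))
  have hrρ : Integrable r ρ := .of_mem_Icc 0 1 hr.aemeasurable
    (ae_of_all _ fun h ↦ ⟨integral_nonneg fun z ↦ (hℓ01 h z).1, hr1 h⟩)
  have hFρ : Integrable (F s) ρ :=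
    ((hrρ.const_mul c).const_mul _).sub ((integrable_finsetSum _ fun i _ ↦ hℓρ i).const_mul α)
  have hFs : ∫ h, F s h ∂ρ
      = Fintype.card ι * (c * ∫ h, r h ∂ρ) - α * ∑ i, ∫ h, ℓ h (s i) ∂ρ := by
    rw [integral_sub ((hrρ.const_mul c).const_mul _)
        ((integrable_finsetSum _ fun i _ ↦ hℓρ i).const_mul α),
      integral_const_mul, integral_const_mul, integral_const_mul,
      integral_finsetSum _ fun i _ ↦ hℓρ i]
  have hexpFπ : Integrable (fun h ↦ Real.exp (F s h)) π :=
    integrable_exp_of_le (hF.comp measurable_prodMk_left) (hFC s)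
  have hdv := integral_le_klReal_add_log_integral_exp hρπ hllr hFρ hexpFπ
  have hlog := Real.log_le_log (integral_exp_pos hexpFπ) (le_of_lt hs)
  linarith

/-- Theorem 5 (Catoni-type PAC-Bayesian bound for arbitrary bounded losses): for any domain
`P` over `X×Y`, any prior `π` on `H`, any measurable loss `ℓ : H×X×Y → [0,1]`, any
`δ ∈ (0,1]` and any `α > 0`, with probability at least `1−δ` over an i.i.d. `m`-sample from
`P`, simultaneously for every posterior `ρ` on `H` (with `KL(ρ‖π) < ∞`, i.e. `ρ ≪ π` and
integrable log-likelihood ratio):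
`E_{(x,y)~P} E_{h~ρ} ℓ(h,x,y) ≤ (α/(1−e^{−α})) · [ (1/m)·Σᵢ E_{h~ρ} ℓ(h,xᵢ,yᵢ)
  + (KL(ρ‖π) + ln(1/δ))/(m·α) ]`. -/
theorem catoni_pac_bayes_bound
    (P : Measure (X × Bool)) [IsProbabilityMeasure P]
    (π : Measure H) [IsProbabilityMeasure π]
    (L : H → X → Bool → ℝ)
    (hLmeas : Measurable fun p : H × X × Bool => L p.1 p.2.1 p.2.2)
    (hL01 : ∀ h x y, L h x y ∈ Set.Icc (0 : ℝ) 1)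
    (m : ℕ) (hm : 0 < m)
    (δ : ℝ) (hδ : δ ∈ Set.Ioc (0 : ℝ) 1)
    (α : ℝ) (hα : 0 < α) :
    (Measure.pi fun _ : Fin m => P)
      {s | ∀ ρ : Measure H, IsProbabilityMeasure ρ → ρ ≪ π →
        Integrable (llr ρ π) ρ →
        ∫ z, ∫ h, L h z.1 z.2 ∂ρ ∂P
          ≤ (α / (1 - Real.exp (-α))) *
              ((1 / (m : ℝ)) * ∑ i : Fin m, ∫ h, L h (s i).1 (s i).2 ∂ρ
                + (klReal ρ π + Real.log (1 / δ)) / ((m : ℝ) * α))}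
      ≥ ENNReal.ofReal (1 - δ) := by
  have hc : 0 < 1 - Real.exp (-α) := sub_pos.2 (Real.exp_lt_one_iff.2 (neg_lt_zero.2 hα))
  refine (catoni_linear_bound (ι := Fin m) P π (ℓ := fun h z ↦ L h z.1 z.2) hLmeas
    (fun h z ↦ hL01 h z.1 z.2) hδ.1 hα.le).trans (measure_mono fun s hs ρ _ hρπ hllr ↦ ?_)
  have hswap : ∫ z, ∫ h, L h z.1 z.2 ∂ρ ∂P = ∫ h, ∫ z, L h z.1 z.2 ∂P ∂ρ :=
    integral_integral_swap <| .of_mem_Icc 0 1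
      (hLmeas.comp (measurable_snd.prodMk measurable_fst)).aemeasurable
      (ae_of_all _ fun p ↦ hL01 p.2 p.1.1 p.1.2)
  have hbound := hs ρ ‹_› hρπ hllr
  rw [Fintype.card_fin] at hbound
  rw [hswap, show ∀ S K : ℝ, α / (1 - Real.exp (-α)) * (1 / m * S + K / (m * α))
      = (α * S + K) / (m * (1 - Real.exp (-α))) from fun S K ↦ by field_simp,
    le_div_iff₀ (by positivity)]
  linarith

end
end

section
/- Gaussian posterior Gibbs risk is the probit loss (Equation (10), proved in Appendix B): for every w ∈ ℝ^d, every x ∈ ℝ^d with x ≠ 0, and every y ∈ {−1,+1}, the Gaussian measure γ_w assigns to the half-space {w' ∈ ℝ^d : y·(w'·x) ≤ 0} the probability Φ(y·(w·x)/‖x‖). Consequently, for any domain P over ℝ^d×{−1,+1} with P-almost surely x ≠ 0, the Gibbs risk satisfies R_P(G_{ρ_w}) = E_{(x,y)~P} Φ(y·(w·x)/‖x‖). -/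
/-!
Under `γ_w` the coordinates of `w'` are independent Gaussians, so multiplying characteristic
functions shows that the projection `w' ↦ w'·x` has law `N(w·x, ‖x‖²)`; hence the half-space
`{w'·x ≤ 0}` has mass `Φ(w·x/‖x‖)`, and a label `y = ±1` only replaces `x` by `y x`. The 0-1 loss
of `h_{w'}` on `(x, y)` agrees with the indicator of `{y (w'·x) ≤ 0}` off the hyperplane
`w'·x = 0`, which is `γ_w`-null, so the risk identity follows from Fubini.
-/

open MeasureTheory

noncomputable section

/-- The real value of a label: `true ↦ +1`, `false ↦ −1`. -/
def yval (b : Bool) : ℝ := if b then 1 else -1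

variable {d : ℕ}

/-- Dot product on `ℝ^d`. -/
def dotp (w x : Fin d → ℝ) : ℝ := ∑ i, w i * x i

/-- Euclidean norm on `ℝ^d`. -/
def nrm (x : Fin d → ℝ) : ℝ := Real.sqrt (∑ i, x i ^ 2)

open Classical in
/-- The linear classifier `h_w(x) = sign(w·x)` (`true ↦ +1`, `false ↦ −1`). -/
def hlin (w x : Fin d → ℝ) : Bool := if 0 < dotp w x then true else false

/-- The Gaussian measure `γ_w` on `ℝ^d` with mean `w` and identity covariance, given as the
product over coordinates of one-dimensional Gaussians `N(w_i, 1)`. -/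
def gauss (w : Fin d → ℝ) : Measure (Fin d → ℝ) :=
  Measure.pi fun i => ProbabilityTheory.gaussianReal (w i) 1

/-- The standard Gaussian tail function `Φ(z) = (1/√(2π)) ∫_z^∞ e^{−t²/2} dt`. -/
def gaussTail (z : ℝ) : ℝ :=
  ∫ t in Set.Ici z, Real.exp (-t ^ 2 / 2) / Real.sqrt (2 * Real.pi)

open scoped NNReal
open ProbabilityTheory

open Complex in
theorem map_pi_gaussianReal_sum_mul {ι : Type*} [Fintype ι] (m : ι → ℝ) (v : ι → ℝ≥0)
    (x : ι → ℝ) :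
    (Measure.pi fun i => gaussianReal (m i) (v i)).map (fun u => ∑ i, u i * x i)
      = gaussianReal (∑ i, m i * x i) (∑ i, ‖x i‖₊ ^ 2 * v i) := by
  have hmeas : Measurable fun u : ι → ℝ => ∑ i, u i * x i := by fun_prop
  refine Measure.ext_of_charFun (funext fun t => ?_)
  rw [charFun_apply_real, integral_map hmeas.aemeasurable (by fun_prop)]
  calc ∫ u, cexp (t * ↑(∑ i, u i * x i) * I) ∂(Measure.pi fun i => gaussianReal (m i) (v i))
      = ∫ u, ∏ i, cexp ((t * x i : ℝ) * u i * I)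
          ∂(Measure.pi fun i => gaussianReal (m i) (v i)) := by
        refine integral_congr_ae (ae_of_all _ fun u => ?_)
        simp only [← Complex.exp_sum, ofReal_sum, ofReal_mul, Finset.mul_sum, Finset.sum_mul]
        exact congrArg cexp (Finset.sum_congr rfl fun i _ => by ring)
    _ = ∏ i, charFun (gaussianReal (m i) (v i)) (t * x i) := by
        rw [integral_fintype_prod_eq_prod (fun i (a : ℝ) => cexp ((t * x i : ℝ) * a * I))]
        simp_rw [charFun_apply_real]
    _ = charFun (gaussianReal (∑ i, m i * x i) (∑ i, ‖x i‖₊ ^ 2 * v i)) t := by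
        simp only [charFun_gaussianReal, ← Complex.exp_sum, NNReal.coe_sum, NNReal.coe_mul,
          NNReal.coe_pow, coe_nnnorm, Real.norm_eq_abs, sq_abs, ofReal_sum, ofReal_mul, ofReal_pow,
          Finset.mul_sum, Finset.sum_mul, Finset.sum_div, ← Finset.sum_sub_distrib]
        exact congrArg cexp (Finset.sum_congr rfl fun i _ => by ring)

theorem gaussianReal_zero_one_Ici (z : ℝ) :
    gaussianReal 0 1 (Set.Ici z) = ENNReal.ofReal (gaussTail z) := by
  rw [gaussianReal_apply_eq_integral _ one_ne_zero, gaussTail]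
  congr 1
  refine setIntegral_congr_fun measurableSet_Ici fun t _ => ?_
  simp [gaussianPDFReal, div_eq_inv_mul]

theorem gaussianReal_Iic_zero (m : ℝ) {v : ℝ≥0} (hv : v ≠ 0) :
    gaussianReal m v (Set.Iic 0) = ENNReal.ofReal (gaussTail (m / √v)) := by
  have hsqrt : 0 < √(v : ℝ) := Real.sqrt_pos.2 (NNReal.coe_pos.2 (pos_iff_ne_zero.2 hv))
  have hmap : (gaussianReal 0 1).map (fun t => m - √v * t) = gaussianReal m v := by
    rw [← Function.comp_def (m - ·) (√v * ·), ← Measure.map_map (by fun_prop) (by fun_prop),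
      gaussianReal_map_const_mul, gaussianReal_map_const_sub, mul_zero, sub_zero, mul_one]
    congr
    exact Real.sq_sqrt v.2
  have hpre : (fun t => m - √v * t) ⁻¹' Set.Iic 0 = Set.Ici (m / √v) := by
    ext t
    simp [div_le_iff₀ hsqrt, mul_comm]
  rw [← hmap, Measure.map_apply (by fun_prop) measurableSet_Iic, hpre, gaussianReal_zero_one_Ici]

theorem gaussTail_nonneg (z : ℝ) : 0 ≤ gaussTail z :=
  integral_nonneg fun _ => by positivity

instance (w : Fin d → ℝ) : IsProbabilityMeasure (gauss w) := by
  unfold gauss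
  infer_instance

theorem continuous_dotp : Continuous fun p : (Fin d → ℝ) × (Fin d → ℝ) => dotp p.1 p.2 := by
  unfold dotp
  fun_prop

theorem measurable_dotp_left (x : Fin d → ℝ) : Measurable (dotp · x) :=
  (continuous_dotp.comp (Continuous.prodMk_left x)).measurable

theorem measurable_hlin : Measurable fun p : (Fin d → ℝ) × (Fin d → ℝ) => hlin p.1 p.2 :=
  Measurable.ite (measurableSet_lt measurable_const continuous_dotp.measurable)
    measurable_const measurable_const

theorem nrm_pos {x : Fin d → ℝ} (hx : x ≠ 0) : 0 < nrm x := by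
  obtain ⟨i, hi⟩ := Function.ne_iff.1 hx
  exact Real.sqrt_pos.2 <|
    Finset.sum_pos' (fun j _ => sq_nonneg (x j)) ⟨i, Finset.mem_univ i, pow_two_pos_of_ne_zero hi⟩

theorem map_gauss_dotp (w x : Fin d → ℝ) :
    (gauss w).map (dotp · x) = gaussianReal (dotp w x) (nrm x ^ 2).toNNReal := by
  have hvar : (nrm x ^ 2).toNNReal = ∑ i, ‖x i‖₊ ^ 2 * 1 := by
    ext
    rw [Real.coe_toNNReal _ (sq_nonneg _), nrm, Real.sq_sqrt (by positivity)]
    simp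
  rw [hvar]
  exact map_pi_gaussianReal_sum_mul w (fun _ => 1) x

theorem gauss_setOf_dotp_nonpos (w : Fin d → ℝ) {x : Fin d → ℝ} (hx : x ≠ 0) :
    gauss w {w' | dotp w' x ≤ 0} = ENNReal.ofReal (gaussTail (dotp w x / nrm x)) := by
  have hv : (nrm x ^ 2).toNNReal ≠ 0 := (Real.toNNReal_pos.2 (pow_pos (nrm_pos hx) 2)).ne'
  change gauss w ((dotp · x) ⁻¹' Set.Iic 0) = _
  rw [← Measure.map_apply (measurable_dotp_left x) measurableSet_Iic, map_gauss_dotp,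
    gaussianReal_Iic_zero _ hv, Real.coe_toNNReal _ (sq_nonneg _), Real.sqrt_sq (nrm_pos hx).le]

theorem ae_gauss_dotp_ne_zero (w : Fin d → ℝ) {x : Fin d → ℝ} (hx : x ≠ 0) :
    ∀ᵐ w' ∂gauss w, dotp w' x ≠ 0 := by
  have := nullSingletonClass_gaussianReal (μ := dotp w x)
    (Real.toNNReal_pos.2 (pow_pos (nrm_pos hx) 2)).ne'
  rw [ae_iff]
  simp only [not_not]
  change gauss w ((dotp · x) ⁻¹' {0}) = 0
  rw [← Measure.map_apply (measurable_dotp_left x) (measurableSet_singleton 0), map_gauss_dotp]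
  exact measure_singleton 0

theorem yval_ne_zero (y : Bool) : yval y ≠ 0 := by
  cases y <;> norm_num [yval]

theorem yval_mul_dotp (y : Bool) (w x : Fin d → ℝ) : yval y * dotp w x = dotp w (yval y • x) := by
  simp only [dotp, Finset.mul_sum, Pi.smul_apply, smul_eq_mul]
  exact Finset.sum_congr rfl fun i _ => by ring

theorem nrm_yval_smul (y : Bool) (x : Fin d → ℝ) : nrm (yval y • x) = nrm x := by
  cases y <;> simp [nrm, yval]

theorem gauss_setOf_yval_mul_dotp_nonpos (w : Fin d → ℝ) {x : Fin d → ℝ} (hx : x ≠ 0) (y : Bool) :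
    gauss w {w' | yval y * dotp w' x ≤ 0}
      = ENNReal.ofReal (gaussTail (yval y * dotp w x / nrm x)) := by
  simp_rw [yval_mul_dotp, ← nrm_yval_smul y x]
  exact gauss_setOf_dotp_nonpos w (smul_ne_zero (yval_ne_zero y) hx)

theorem l01_hlin_eq_indicator {w' x : Fin d → ℝ} (h : dotp w' x ≠ 0) (y : Bool) :
    l01 (hlin w' x) y = {u | yval y * dotp u x ≤ 0}.indicator 1 w' := by
  rcases h.lt_or_gt with h | h <;> cases y <;>
    simp [l01, hlin, yval, h, h.le, h.not_ge]

theorem integral_l01_hlin (w : Fin d → ℝ) {x : Fin d → ℝ} (hx : x ≠ 0) (y : Bool) :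
    ∫ w', l01 (hlin w' x) y ∂gauss w = gaussTail (yval y * dotp w x / nrm x) := by
  have hset : MeasurableSet {u | yval y * dotp u x ≤ 0} :=
    measurableSet_le (measurable_const.mul (measurable_dotp_left x)) measurable_const
  rw [integral_congr_ae ((ae_gauss_dotp_ne_zero w hx).mono fun _ h => l01_hlin_eq_indicator h y),
    integral_indicator_one hset, measureReal_def, gauss_setOf_yval_mul_dotp_nonpos w hx y,
    ENNReal.toReal_ofReal (gaussTail_nonneg _)]

theorem integrable_l01_hlin (μ : Measure (Fin d → ℝ)) (P : Measure ((Fin d → ℝ) × Bool))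
    [IsFiniteMeasure μ] [IsFiniteMeasure P] :
    Integrable (Function.uncurry fun w' (z : (Fin d → ℝ) × Bool) => l01 (hlin w' z.1) z.2)
      (μ.prod P) := by
  have hmeas : Measurable fun p : (Fin d → ℝ) × (Fin d → ℝ) × Bool => l01 (hlin p.1 p.2.1) p.2.2 :=
    (measurable_of_countable (Function.uncurry l01)).comp <|
      (measurable_hlin.comp (measurable_fst.prodMk measurable_snd.fst)).prodMk measurable_snd.snd
  refine Integrable.of_bound hmeas.aestronglyMeasurable 1 (ae_of_all _ fun p => ?_)
  simp only [Function.uncurry, l01]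
  split_ifs <;> norm_num

/-- Gaussian posterior Gibbs risk is the probit loss (Equation (10)): for every `w ∈ ℝ^d`,
every `x ≠ 0` and every label `y ∈ {−1,+1}`, `γ_w {w' : y·(w'·x) ≤ 0} = Φ(y·(w·x)/‖x‖)`;
consequently, for any domain `P` over `ℝ^d×{−1,+1}` with `P`-almost surely `x ≠ 0`,
`R_P(G_{ρ_w}) = E_{(x,y)~P} Φ(y·(w·x)/‖x‖)`. -/
theorem gaussian_gibbs_risk_probit (d : ℕ) (w : Fin d → ℝ) :
    (∀ x : Fin d → ℝ, x ≠ 0 → ∀ y : Bool,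
      gauss w {w' | yval y * dotp w' x ≤ 0}
        = ENNReal.ofReal (gaussTail (yval y * dotp w x / nrm x)))
    ∧ ∀ P : Measure ((Fin d → ℝ) × Bool), IsProbabilityMeasure P →
        (∀ᵐ z ∂P, z.1 ≠ 0) →
        ∫ w', ∫ z, l01 (hlin w' z.1) z.2 ∂P ∂(gauss w)
          = ∫ z, gaussTail (yval z.2 * dotp w z.1 / nrm z.1) ∂P := by
  refine ⟨fun x hx y => gauss_setOf_yval_mul_dotp_nonpos w hx y, fun P _ hP => ?_⟩
  rw [integral_integral_swap (integrable_l01_hlin _ _)]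
  exact integral_congr_ae (hP.mono fun z hz => integral_l01_hlin w hz z.2)
end
end
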